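/- Let m be a positive integer, B > 0, and 0 < ε ≤ 3. Set λ = ε²/(324B), η = ε³/(5832B), and γ = ε³/(5832Bm). Let K be a real symmetric positive semidefinite m×m matrix, K_γ = K + γmI, and let K̄_γ be a real symmetric positive semidefinite m×m matrix with K̄_γ ⪯ K_γ ⪯ K̄_γ + ηmI. Let Y ∈ ℝ^m with all entries y_i in [0,1], set ᾱ_γ = (K̄_γ + λmI)⁻¹ Y and α* = K_γ⁻¹ K̄_γ ᾱ_γ. Let α̃ ∈ ℝ^m be any vector such that |(K_γ α̃)_i − (K_γ α*)_i| ≤ ε/4 for every i. Then for every α_B ∈ ℝ^m with α_BᵀK α_B ≤ B and ‖K α_B − Y‖₂ ≤ √m, (1/m) Σ_{i=1}^m ( clip_{0,1}((K_γ α̃)_i) − y_i )² ≤ (1/m)‖K α_B − Y‖₂² + ε. -/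

import Mathlib

/-! The comparison point `w = K (K + γmI)⁻¹ α_B` satisfies `K_γ w = K α_B` and
`wᵀ K_γ w ≤ α_Bᵀ K α_B ≤ B`. As `0 ⪯ K_γ - K̄_γ ⪯ ηmI`, we get
`‖(K_γ - K̄_γ) w‖² ≤ ηm · wᵀ (K_γ - K̄_γ) w ≤ ηmB`, so `w` fits `Y` through `K̄_γ` almost as well
as `α_B` does through `K`. Ridge optimality of `ᾱ_γ` against `w` costs at most `λm · B` in squared
loss, and `K_γ α* = K̄_γ ᾱ_γ`, so the entrywise error of `α̃` costs `ε√m/4` in `ℓ²`. With the chosen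
constants the errors add up to `ε√m/3`, and clipping to `[0,1]` can only move a prediction closer to
its label. -/

open Matrix

/-- Spectral (operator 2-) norm of a real square matrix. -/
noncomputable def matSpectralNorm {m : ℕ} (A : Matrix (Fin m) (Fin m) ℝ) : ℝ :=
  ‖Matrix.toEuclideanCLM (𝕜 := ℝ) A‖

/-- Euclidean (ℓ²) norm of a vector in ℝ^m. -/
noncomputable def l2norm {m : ℕ} (v : Fin m → ℝ) : ℝ :=
  Real.sqrt (∑ i, v i ^ 2)

/-- Clipping a real number to the interval [0,1]. -/
noncomputable def clip01 (x : ℝ) : ℝ := max 0 (min 1 x)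

namespace Matrix

lemma mulVec_nonsing_inv_mulVec {n R : Type*} [Fintype n] [DecidableEq n] [CommRing R]
    {A : Matrix n n R} (hA : IsUnit A) (x : n → R) : A *ᵥ (A⁻¹ *ᵥ x) = x := by
  rw [mulVec_mulVec, mul_nonsing_inv _ ((isUnit_iff_isUnit_det A).mp hA), one_mulVec]

variable {n : Type*}

lemma PosSemidef.isSymm {A : Matrix n n ℝ} (hA : A.PosSemidef) : A.IsSymm :=
  isHermitian_iff_isSymm.mp hA.isHermitian

variable [Fintype n]

lemma IsSymm.dotProduct_mulVec_comm {A : Matrix n n ℝ} (hA : A.IsSymm) (x y : n → ℝ) :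
    x ⬝ᵥ (A *ᵥ y) = y ⬝ᵥ (A *ᵥ x) := by
  rw [dotProduct_mulVec, ← mulVec_transpose, hA.eq, dotProduct_comm]

lemma PosSemidef.dotProduct_mulVec_self_nonneg {A : Matrix n n ℝ} (hA : A.PosSemidef)
    (x : n → ℝ) : 0 ≤ x ⬝ᵥ (A *ᵥ x) := by
  simpa using hA.dotProduct_mulVec_nonneg x

variable [DecidableEq n]

open scoped MatrixOrder in
lemma PosSemidef.mulVec_dotProduct_mulVec_le {D : Matrix n n ℝ} (hD : D.PosSemidef) {c : ℝ}
    (hDc : (c • 1 - D).PosSemidef) (x : n → ℝ) :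
    (D *ᵥ x) ⬝ᵥ (D *ᵥ x) ≤ c * (x ⬝ᵥ (D *ᵥ x)) := by
  -- with `S = √D`: `‖D x‖² = (S x)ᵀ D (S x) ≤ c ‖S x‖² = c xᵀ D x`
  set S := CFC.sqrt D
  have hS : S.IsSymm := (CFC.sqrt_nonneg D).posSemidef.isSymm
  have hSS : S * S = D := CFC.sqrt_mul_sqrt_self D hD.nonneg
  have hDx : D *ᵥ x = S *ᵥ (S *ᵥ x) := by rw [mulVec_mulVec, hSS]
  have := hDc.dotProduct_mulVec_self_nonneg (S *ᵥ x)
  rw [sub_mulVec, dotProduct_sub, smul_mulVec, one_mulVec, dotProduct_smul, smul_eq_mul] at this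
  have hDSx : D *ᵥ (S *ᵥ x) = S *ᵥ (D *ᵥ x) := by
    rw [mulVec_mulVec, mulVec_mulVec, ← hSS, Matrix.mul_assoc]
  calc (D *ᵥ x) ⬝ᵥ (D *ᵥ x) = (S *ᵥ x) ⬝ᵥ (D *ᵥ (S *ᵥ x)) := by
        rw [hDSx, hS.dotProduct_mulVec_comm, ← hDx]
    _ ≤ c * ((S *ᵥ x) ⬝ᵥ (S *ᵥ x)) := by linarith
    _ = c * (x ⬝ᵥ (D *ᵥ x)) := by rw [hDx, hS.dotProduct_mulVec_comm]

theorem PosSemidef.ridge_objective_le {A : Matrix n n ℝ} (hA : A.PosSemidef) {c : ℝ}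
    (hc : 0 ≤ c) {Y β : n → ℝ} (hβ : (A + c • 1) *ᵥ β = Y) (α : n → ℝ) :
    (A *ᵥ β - Y) ⬝ᵥ (A *ᵥ β - Y) + c * (β ⬝ᵥ (A *ᵥ β)) ≤
      (A *ᵥ α - Y) ⬝ᵥ (A *ᵥ α - Y) + c * (α ⬝ᵥ (A *ᵥ α)) := by
  -- the residual at `β` is `-c β`, so the cross terms of the expansion around `β` cancel
  have hres : A *ᵥ β - Y = -(c • β) := by
    rw [← hβ, add_mulVec, smul_mulVec, one_mulVec]; abel
  obtain ⟨δ, rfl⟩ : ∃ δ, α = β + δ := ⟨α - β, by abel⟩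
  have hsplit : A *ᵥ (β + δ) - Y = (A *ᵥ β - Y) + A *ᵥ δ := by rw [mulVec_add]; abel
  have hcross : (A *ᵥ β - Y) ⬝ᵥ (A *ᵥ δ) = -c * (β ⬝ᵥ (A *ᵥ δ)) := by
    rw [hres, neg_dotProduct, smul_dotProduct, smul_eq_mul, neg_mul]
  have hsymm := hA.isSymm.dotProduct_mulVec_comm β δ
  have hδ := mul_nonneg hc (hA.dotProduct_mulVec_self_nonneg δ)
  have hAδ : 0 ≤ (A *ᵥ δ) ⬝ᵥ (A *ᵥ δ) := by
    simpa using dotProduct_star_self_nonneg (A *ᵥ δ)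
  rw [hsplit, mulVec_add]
  simp only [add_dotProduct, dotProduct_add, dotProduct_comm (A *ᵥ δ) (A *ᵥ β - Y)]
  rw [hcross, hsymm]
  nlinarith

theorem PosSemidef.exists_regularized_preimage {K : Matrix n n ℝ} (hK : K.PosSemidef) {η : ℝ}
    (hη : 0 < η) (α : n → ℝ) :
    ∃ w, (K + η • 1) *ᵥ w = K *ᵥ α ∧ w ⬝ᵥ ((K + η • 1) *ᵥ w) ≤ α ⬝ᵥ (K *ᵥ α) := by
  have hunit : IsUnit (K + η • 1) := (PosDef.posSemidef_add hK (PosDef.one.smul hη)).isUnit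
  obtain ⟨v, rfl⟩ := mulVec_surjective_iff_isUnit.2 hunit α
  have hcomm : (K + η • 1) * K = K * (K + η • 1) :=
    ((Commute.refl K).add_left ((Commute.one_left K).smul_left η)).eq
  refine ⟨K *ᵥ v, by rw [mulVec_mulVec, hcomm, ← mulVec_mulVec], ?_⟩
  have hvKw := hK.isSymm.dotProduct_mulVec_comm v (K *ᵥ v)
  have hv := hK.dotProduct_mulVec_self_nonneg v
  have hw : 0 ≤ (K *ᵥ v) ⬝ᵥ (K *ᵥ v) := by simpa using dotProduct_star_self_nonneg (K *ᵥ v)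
  simp only [add_mulVec, smul_mulVec, one_mulVec, mulVec_add, mulVec_smul, dotProduct_add,
    add_dotProduct, dotProduct_smul, smul_dotProduct, smul_eq_mul] at hvKw ⊢
  rw [hvKw]
  nlinarith [mul_nonneg hη.le hw, mul_nonneg (sq_nonneg η) hv]

end Matrix

lemma add_div_three_mul_sq_le {L s ε : ℝ} (hL : 0 ≤ L) (hLs : L ≤ s) (hε0 : 0 ≤ ε)
    (hε3 : ε ≤ 3) : (L + ε / 3 * s) ^ 2 ≤ L ^ 2 + ε * s ^ 2 := by
  have hs : 0 ≤ s := hL.trans hLs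
  nlinarith [mul_nonneg (mul_nonneg hε0 hs) (sub_nonneg.2 hLs),
    mul_nonneg (mul_nonneg hε0 (sub_nonneg.2 hε3)) (sq_nonneg s)]

section l2norm

variable {m : ℕ}

lemma l2norm_eq_sqrt_dotProduct (v : Fin m → ℝ) : l2norm v = √(v ⬝ᵥ v) := by
  simp [l2norm, dotProduct, sq]

lemma l2norm_eq_norm (v : Fin m → ℝ) : l2norm v = ‖WithLp.toLp 2 v‖ := by
  simp [l2norm, EuclideanSpace.norm_eq]

lemma l2norm_sub_le (u v : Fin m → ℝ) : l2norm (u - v) ≤ l2norm u + l2norm v := by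
  simpa [l2norm_eq_norm] using norm_sub_le (WithLp.toLp 2 u) (WithLp.toLp 2 v)

lemma l2norm_sub_le_add (u v w : Fin m → ℝ) :
    l2norm (u - w) ≤ l2norm (u - v) + l2norm (v - w) := by
  simpa [l2norm_eq_norm] using
    norm_sub_le_norm_sub_add_norm_sub (WithLp.toLp 2 u) (WithLp.toLp 2 v) (WithLp.toLp 2 w)

lemma l2norm_le_mul_sqrt_of_forall_abs_le {v : Fin m → ℝ} {t : ℝ} (h : ∀ i, |v i| ≤ t) :
    l2norm v ≤ t * √m := by
  rcases Nat.eq_zero_or_pos m with rfl | hm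
  · simp [l2norm]
  have ht : 0 ≤ t := (abs_nonneg _).trans (h ⟨0, hm⟩)
  rw [l2norm, ← Real.sqrt_sq ht, ← Real.sqrt_mul (sq_nonneg t), mul_comm]
  gcongr
  calc ∑ i, v i ^ 2 ≤ ∑ _i : Fin m, t ^ 2 :=
        Finset.sum_le_sum fun i _ => sq_le_sq' (abs_le.1 (h i)).1 (abs_le.1 (h i)).2
    _ = m * t ^ 2 := by simp

lemma l2norm_mulVec_le_sqrt {D : Matrix (Fin m) (Fin m) ℝ} (hD : D.PosSemidef) {t B : ℝ}
    (ht : 0 ≤ t) (hDt : (t • 1 - D).PosSemidef) {x : Fin m → ℝ} (hx : x ⬝ᵥ (D *ᵥ x) ≤ B) :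
    l2norm (D *ᵥ x) ≤ √(t * B) := by
  rw [l2norm_eq_sqrt_dotProduct]
  exact Real.sqrt_le_sqrt
    ((hD.mulVec_dotProduct_mulVec_le hDt x).trans (mul_le_mul_of_nonneg_left hx ht))

lemma l2norm_ridge_residual_le {A : Matrix (Fin m) (Fin m) ℝ} (hA : A.PosSemidef) {c : ℝ}
    (hc : 0 ≤ c) {Y β : Fin m → ℝ} (hβ : (A + c • 1) *ᵥ β = Y) (α : Fin m → ℝ) :
    l2norm (A *ᵥ β - Y) ≤ l2norm (A *ᵥ α - Y) + √(c * (α ⬝ᵥ (A *ᵥ α))) := by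
  have hridge := hA.ridge_objective_le hc hβ α
  have hβ' := mul_nonneg hc (hA.dotProduct_mulVec_self_nonneg β)
  have hα' := mul_nonneg hc (hA.dotProduct_mulVec_self_nonneg α)
  have hres : 0 ≤ (A *ᵥ α - Y) ⬝ᵥ (A *ᵥ α - Y) := by
    simpa using dotProduct_star_self_nonneg (A *ᵥ α - Y)
  rw [l2norm_eq_sqrt_dotProduct, l2norm_eq_sqrt_dotProduct, Real.sqrt_le_left (by positivity)]
  nlinarith [Real.sq_sqrt hα', Real.sq_sqrt hres, Real.sqrt_nonneg (c * (α ⬝ᵥ (A *ᵥ α))),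
    Real.sqrt_nonneg ((A *ᵥ α - Y) ⬝ᵥ (A *ᵥ α - Y))]

theorem l2norm_ridge_sub_le_of_sandwich {K Kbar : Matrix (Fin m) (Fin m) ℝ} (hK : K.PosSemidef)
    (hKbar : Kbar.PosSemidef) {η t c B : ℝ} (hη : 0 < η) (ht : 0 ≤ t) (hc : 0 ≤ c)
    (hlow : (K + η • 1 - Kbar).PosSemidef) (hup : (Kbar + t • 1 - (K + η • 1)).PosSemidef)
    {Y β : Fin m → ℝ} (hβ : (Kbar + c • 1) *ᵥ β = Y) {α : Fin m → ℝ} (hα : α ⬝ᵥ (K *ᵥ α) ≤ B) :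
    l2norm (Kbar *ᵥ β - Y) ≤ l2norm (K *ᵥ α - Y) + √(t * B) + √(c * B) := by
  obtain ⟨w, hKw, hw⟩ := hK.exists_regularized_preimage hη α
  have hDt : (t • 1 - (K + η • 1 - Kbar)).PosSemidef := by convert hup using 1; abel
  set D := K + η • 1 - Kbar
  have hDw := hlow.dotProduct_mulVec_self_nonneg w
  have hKbarw := hKbar.dotProduct_mulVec_self_nonneg w
  have hsum : w ⬝ᵥ (D *ᵥ w) + w ⬝ᵥ (Kbar *ᵥ w) = w ⬝ᵥ ((K + η • 1) *ᵥ w) := by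
    rw [← dotProduct_add, ← add_mulVec, sub_add_cancel]
  have hsplit : Kbar *ᵥ w - Y = (K *ᵥ α - Y) - D *ᵥ w := by rw [sub_mulVec, hKw]; abel
  calc l2norm (Kbar *ᵥ β - Y) ≤ l2norm (Kbar *ᵥ w - Y) + √(c * (w ⬝ᵥ (Kbar *ᵥ w))) :=
        l2norm_ridge_residual_le hKbar hc hβ w
    _ ≤ l2norm (K *ᵥ α - Y) + l2norm (D *ᵥ w) + √(c * B) := by
        rw [hsplit]
        gcongr
        · exact l2norm_sub_le _ _
        · linarith
    _ ≤ l2norm (K *ᵥ α - Y) + √(t * B) + √(c * B) := by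
        gcongr
        exact l2norm_mulVec_le_sqrt hlow ht hDt (by linarith)

lemma sq_clip01_sub_le {t y : ℝ} (hy : y ∈ Set.Icc (0 : ℝ) 1) :
    (clip01 t - y) ^ 2 ≤ (t - y) ^ 2 := by
  obtain ⟨hy0, hy1⟩ := hy
  unfold clip01
  rcases le_total t 0 with ht | ht
  · rw [max_eq_left ((min_le_right 1 t).trans ht)]
    nlinarith
  rcases le_total t 1 with ht' | ht'
  · rw [min_eq_right ht', max_eq_right ht]
  · rw [min_eq_left ht', max_eq_right zero_le_one]
    nlinarith

lemma sum_sq_clip01_sub_le {u Y : Fin m → ℝ} (hY : ∀ i, Y i ∈ Set.Icc (0 : ℝ) 1) :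
    ∑ i, (clip01 (u i) - Y i) ^ 2 ≤ l2norm (u - Y) ^ 2 := by
  rw [l2norm, Real.sq_sqrt (by positivity)]
  exact Finset.sum_le_sum fun i _ => sq_clip01_sub_le (hY i)

lemma mean_sq_clip01_sub_le {u Y : Fin m → ℝ} (hm : 0 < m) (hY : ∀ i, Y i ∈ Set.Icc (0 : ℝ) 1)
    {L ε : ℝ} (hL : 0 ≤ L) (hLm : L ≤ √m) (hε0 : 0 ≤ ε) (hε3 : ε ≤ 3)
    (hu : l2norm (u - Y) ≤ L + ε / 3 * √m) :
    (1 / m) * ∑ i, (clip01 (u i) - Y i) ^ 2 ≤ (1 / m) * L ^ 2 + ε := by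
  have hm' : (0 : ℝ) < m := Nat.cast_pos.2 hm
  calc (1 / m) * ∑ i, (clip01 (u i) - Y i) ^ 2 ≤ (1 / m) * l2norm (u - Y) ^ 2 := by
        gcongr; exact sum_sq_clip01_sub_le hY
    _ ≤ (1 / m) * (L + ε / 3 * √m) ^ 2 := by gcongr; exact Real.sqrt_nonneg _
    _ ≤ (1 / m) * (L ^ 2 + ε * √m ^ 2) := by
        gcongr; exact add_div_three_mul_sq_le hL hLm hε0 hε3
    _ = (1 / m) * L ^ 2 + ε := by rw [Real.sq_sqrt hm'.le]; field_simp

end l2norm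

/-- Accuracy guarantee of the compression scheme (core of Theorem 10). -/
theorem compression_accuracy {m : ℕ} (hm : 0 < m) (B ε : ℝ) (hB : 0 < B)
    (hε0 : 0 < ε) (hε3 : ε ≤ 3)
    (lam η γ : ℝ) (hlam : lam = ε ^ 2 / (324 * B))
    (hη : η = ε ^ 3 / (5832 * B)) (hγ : γ = ε ^ 3 / (5832 * B * m))
    (K : Matrix (Fin m) (Fin m) ℝ) (hK : K.PosSemidef)
    (Kγ : Matrix (Fin m) (Fin m) ℝ) (hKγ : Kγ = K + (γ * m) • 1)
    (Kbar : Matrix (Fin m) (Fin m) ℝ) (hKbar : Kbar.PosSemidef)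
    (hsand1 : (Kγ - Kbar).PosSemidef)
    (hsand2 : (Kbar + (η * m) • 1 - Kγ).PosSemidef)
    (Y : Fin m → ℝ) (hY : ∀ i, Y i ∈ Set.Icc (0 : ℝ) 1)
    (αbarγ αstar : Fin m → ℝ)
    (hαbarγ : αbarγ = (Kbar + (lam * m) • 1)⁻¹ *ᵥ Y)
    (hαstar : αstar = Kγ⁻¹ *ᵥ (Kbar *ᵥ αbarγ))
    (αtil : Fin m → ℝ)
    (hαtil : ∀ i, |(Kγ *ᵥ αtil) i - (Kγ *ᵥ αstar) i| ≤ ε / 4)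
    (αB : Fin m → ℝ) (hαB : αB ⬝ᵥ (K *ᵥ αB) ≤ B)
    (hloss : l2norm (K *ᵥ αB - Y) ≤ Real.sqrt m) :
    (1 / m) * ∑ i, (clip01 ((Kγ *ᵥ αtil) i) - Y i) ^ 2 ≤
      (1 / m) * l2norm (K *ᵥ αB - Y) ^ 2 + ε := by
  have hm' : (0 : ℝ) < m := Nat.cast_pos.2 hm
  have hsm : √m ^ 2 = m := Real.sq_sqrt hm'.le
  have hη0 : 0 < η := by rw [hη]; positivity
  have hlam0 : 0 < lam := by rw [hlam]; positivity
  have hKγη : Kγ = K + η • 1 := by rw [hKγ, hγ, hη]; field_simp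
  have hβ : (Kbar + (lam * m) • 1) *ᵥ αbarγ = Y := hαbarγ ▸ mulVec_nonsing_inv_mulVec
    (PosDef.posSemidef_add hKbar (PosDef.one.smul (mul_pos hlam0 hm'))).isUnit Y
  have hstar : Kγ *ᵥ αstar = Kbar *ᵥ αbarγ := hαstar ▸ mulVec_nonsing_inv_mulVec
    (hKγη ▸ PosDef.posSemidef_add hK (PosDef.one.smul hη0)).isUnit _
  have hridge := l2norm_ridge_sub_le_of_sandwich hK hKbar hη0 (mul_pos hη0 hm').le
    (mul_pos hlam0 hm').le (hKγη ▸ hsand1) (hKγη ▸ hsand2) hβ hαB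
  have happrox : l2norm (Kγ *ᵥ αtil - Kbar *ᵥ αbarγ) ≤ ε / 4 * √m :=
    hstar ▸ l2norm_le_mul_sqrt_of_forall_abs_le hαtil
  have hη' : √(η * m * B) ≤ ε / 36 * √m := by
    rw [Real.sqrt_le_left (by positivity), mul_pow, hsm, hη]
    field_simp
    nlinarith
  have hlam' : √(lam * m * B) ≤ ε / 18 * √m := by
    rw [Real.sqrt_le_left (by positivity), mul_pow, hsm, hlam]
    field_simp
    nlinarith
  exact mean_sq_clip01_sub_le hm hY (Real.sqrt_nonneg _) hloss hε0.le hε3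
    (by linarith [l2norm_sub_le_add (Kγ *ᵥ αtil) (Kbar *ᵥ αbarγ) Y])
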